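/- arXiv:1904.09332 — 2 statements merged into one kernel-verified Lean document; each statement's English description precedes it below -/
import Mathlib

section
/- Let S and M be symmetric positive definite real N×N matrices and f ∈ ℝ^N. For every y ≥ 0, the solution w₋(y) of (S + e^{-y} M) w₋(y) = f satisfies ‖w₋(y)‖_M ≤ (1/λ_min(S, M)) · ‖f‖_{M^{-1}}, where λ_min(S, M) := inf over nonzero x ∈ ℝ^N of (xᵀ S x)/(xᵀ M x). -/
/-!
Testing the equation with `w` gives `wᵀf = wᵀSw + e^{-y} wᵀMw ≥ λ_min(S, M) ‖w‖_M²`, while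
Cauchy–Schwarz for the inner product `⟨u, v⟩_M = uᵀMv` gives
`wᵀf = ⟨w, M⁻¹f⟩_M ≤ ‖w‖_M ‖f‖_{M⁻¹}`; dividing by `λ_min(S, M) ‖w‖_M` gives the estimate.
-/

open Matrix

/-- The smallest generalized eigenvalue of the pair `(S, M)`:
`λ_min(S, M) = inf_{x ≠ 0} (xᵀ S x)/(xᵀ M x)`. -/
noncomputable def lamMinGen {N : ℕ} (S M : Matrix (Fin N) (Fin N) ℝ) : ℝ :=
  sInf ((fun x : Fin N → ℝ => (x ⬝ᵥ S.mulVec x) / (x ⬝ᵥ M.mulVec x)) '' {x | x ≠ 0})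

/-- The `M`-norm `‖x‖_M = √(xᵀ M x)`. -/
noncomputable def normWeighted {N : ℕ} (M : Matrix (Fin N) (Fin N) ℝ) (x : Fin N → ℝ) : ℝ :=
  Real.sqrt (x ⬝ᵥ M.mulVec x)

section Rayleigh

variable {N : ℕ} (S M : Matrix (Fin N) (Fin N) ℝ)

noncomputable def genRayleigh (x : Fin N → ℝ) : ℝ :=
  (x ⬝ᵥ S *ᵥ x) / (x ⬝ᵥ M *ᵥ x)

theorem lamMinGen_eq_sInf_genRayleigh :
    lamMinGen S M = sInf (genRayleigh S M '' {x | x ≠ 0}) := rfl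

theorem genRayleigh_smul {c : ℝ} (hc : c ≠ 0) (x : Fin N → ℝ) :
    genRayleigh S M (c • x) = genRayleigh S M x := by
  simp only [genRayleigh, mulVec_smul, dotProduct_smul, smul_dotProduct, smul_eq_mul]
  rw [← mul_assoc, ← mul_assoc, mul_div_mul_left _ _ (mul_ne_zero hc hc)]

variable {S M}

theorem continuousOn_genRayleigh (hM : M.PosDef) :
    ContinuousOn (genRayleigh S M) {x | x ≠ 0} := by
  refine ContinuousOn.div (by fun_prop) (by fun_prop) fun x hx => ?_
  exact (hM.dotProduct_mulVec_pos hx).ne'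

/-- By homogeneity the infimum over `x ≠ 0` is one over the unit sphere, where it is attained. -/
theorem exists_isLeast_genRayleigh [Nonempty (Fin N)] (hM : M.PosDef) :
    ∃ x₀ ≠ 0, IsLeast (genRayleigh S M '' {x | x ≠ 0}) (genRayleigh S M x₀) := by
  have hsphere : Metric.sphere (0 : Fin N → ℝ) 1 ⊆ {x | x ≠ 0} := fun x hx =>
    ne_zero_of_mem_unit_sphere (⟨x, hx⟩ : Metric.sphere (0 : Fin N → ℝ) 1)
  obtain ⟨x₀, hx₀, hmin⟩ := (isCompact_sphere (0 : Fin N → ℝ) 1).exists_isMinOn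
    (NormedSpace.sphere_nonempty.2 zero_le_one) ((continuousOn_genRayleigh hM).mono hsphere)
  refine ⟨x₀, hsphere hx₀, ⟨x₀, hsphere hx₀, rfl⟩, ?_⟩
  rintro _ ⟨x, hx, rfl⟩
  have hnorm : ‖x‖⁻¹ ≠ 0 := inv_ne_zero (norm_ne_zero_iff.2 hx)
  rw [← genRayleigh_smul S M hnorm x]
  exact hmin (by simpa [norm_smul] using inv_mul_cancel₀ (norm_ne_zero_iff.2 hx))

theorem lamMinGen_pos [Nonempty (Fin N)] (hS : S.PosDef) (hM : M.PosDef) : 0 < lamMinGen S M := by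
  obtain ⟨x₀, hx₀, hleast⟩ := exists_isLeast_genRayleigh (S := S) hM
  rw [lamMinGen_eq_sInf_genRayleigh, hleast.csInf_eq]
  exact div_pos (hS.dotProduct_mulVec_pos hx₀) (hM.dotProduct_mulVec_pos hx₀)

theorem lamMinGen_mul_le (hM : M.PosDef) {x : Fin N → ℝ} (hx : x ≠ 0) :
    lamMinGen S M * (x ⬝ᵥ M *ᵥ x) ≤ x ⬝ᵥ S *ᵥ x := by
  obtain ⟨i, -⟩ := Function.ne_iff.1 hx
  have : Nonempty (Fin N) := ⟨i⟩
  obtain ⟨_, -, hleast⟩ := exists_isLeast_genRayleigh (S := S) hM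
  have hpos : 0 < x ⬝ᵥ M *ᵥ x := hM.dotProduct_mulVec_pos hx
  rw [← le_div_iff₀ hpos]
  exact csInf_le hleast.bddBelow ⟨x, hx, rfl⟩

end Rayleigh

section WeightedEstimates

variable {N : ℕ} {M : Matrix (Fin N) (Fin N) ℝ}

theorem dotProduct_le_normWeighted_mul_normWeighted_inv (hM : M.PosDef) (w f : Fin N → ℝ) :
    w ⬝ᵥ f ≤ normWeighted M w * normWeighted M⁻¹ f := by
  have hMv : M *ᵥ (M⁻¹ *ᵥ f) = f := by
    rw [mulVec_mulVec, mul_nonsing_inv _ hM.det_pos.ne'.isUnit, one_mulVec]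
  have hcs := (toBilin' M).apply_sq_le_of_symm
    (fun x => by simpa [toBilin'_apply'] using hM.posSemidef.dotProduct_mulVec_nonneg x)
    (LinearMap.BilinForm.isSymm_iff.1 (isSymm_toBilin'_iff_isSymm.2 hM.isHermitian)) w (M⁻¹ *ᵥ f)
  simp only [toBilin'_apply', hMv, dotProduct_comm (M⁻¹ *ᵥ f)] at hcs
  have hMw : 0 ≤ w ⬝ᵥ M *ᵥ w := hM.posSemidef.dotProduct_mulVec_nonneg w
  rw [normWeighted, normWeighted, ← Real.sqrt_mul hMw]
  exact (le_abs_self _).trans (Real.abs_le_sqrt hcs)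

variable {S : Matrix (Fin N) (Fin N) ℝ}

theorem lamMinGen_mul_le_dotProduct_of_mulVec_eq (hM : M.PosDef) {c : ℝ} (hc : 0 ≤ c)
    {w f : Fin N → ℝ} (hw : (S + c • M) *ᵥ w = f) (hw0 : w ≠ 0) :
    lamMinGen S M * (w ⬝ᵥ M *ᵥ w) ≤ w ⬝ᵥ f := by
  have hMw : 0 ≤ w ⬝ᵥ M *ᵥ w := hM.posSemidef.dotProduct_mulVec_nonneg w
  rw [← hw, add_mulVec, smul_mulVec, dotProduct_add, dotProduct_smul, smul_eq_mul]
  linarith [lamMinGen_mul_le (S := S) hM hw0, mul_nonneg hc hMw]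

end WeightedEstimates

theorem wminus_stability_general {N : ℕ} (S M : Matrix (Fin N) (Fin N) ℝ)
    (hS : S.PosDef) (hM : M.PosDef) (f : Fin N → ℝ) (y : ℝ)
    (wminus : Fin N → ℝ) (hw : (S + Real.exp (-y) • M).mulVec wminus = f) :
    normWeighted M wminus ≤ (1 / lamMinGen S M) * normWeighted M⁻¹ f := by
  rcases eq_or_ne wminus 0 with rfl | hw0
  · simp [← hw, normWeighted]
  have : Nonempty (Fin N) := ⟨(Function.ne_iff.1 hw0).choose⟩
  have hMw : 0 < wminus ⬝ᵥ M *ᵥ wminus := hM.dotProduct_mulVec_pos hw0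
  have hA : 0 < normWeighted M wminus := Real.sqrt_pos.2 hMw
  have henergy := lamMinGen_mul_le_dotProduct_of_mulVec_eq hM (Real.exp_pos (-y)).le hw hw0
  rw [← Real.sq_sqrt hMw.le, ← normWeighted] at henergy
  have hcs := dotProduct_le_normWeighted_mul_normWeighted_inv hM wminus f
  rw [one_div, inv_mul_eq_div, le_div_iff₀ (lamMinGen_pos hS hM)]
  refine le_of_mul_le_mul_left ?_ hA
  calc normWeighted M wminus * (normWeighted M wminus * lamMinGen S M)
      = lamMinGen S M * normWeighted M wminus ^ 2 := by ring
    _ ≤ wminus ⬝ᵥ f := henergy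
    _ ≤ normWeighted M wminus * normWeighted M⁻¹ f := hcs

/-- Estimate (3.13b): for symmetric positive definite stiffness and mass matrices `S, M`
and any `y ≥ 0`, the solution `w₋(y)` of `(S + e^{-y} M) w₋(y) = f` satisfies
`‖w₋(y)‖_M ≤ (1/λ_min(S,M)) ‖f‖_{M⁻¹}`. -/
theorem wminus_stability {N : ℕ} (S M : Matrix (Fin N) (Fin N) ℝ)
    (hS : S.PosDef) (hM : M.PosDef) (f : Fin N → ℝ) (y : ℝ) (hy : 0 ≤ y)
    (wminus : Fin N → ℝ) (hw : (S + Real.exp (-y) • M).mulVec wminus = f) :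
    normWeighted M wminus ≤ (1 / lamMinGen S M) * normWeighted M⁻¹ f :=
  wminus_stability_general S M hS hM f y wminus hw
end

section
/- Let S and M be symmetric positive definite real N×N matrices, let f ∈ ℝ^N, and for y ≥ 0 set w₊(y) := (e^{-y} S + M)^{-1} f. Let s₊ ∈ (0,1), and let (y_j, τ_j)_{j=1}^{Q} be a quadrature rule with y_j ≥ 0 and τ_j ≥ 0. For a > 0 and b > 0 define g(a,b) := | ∫₀^∞ e^{-y}/(1 + a e^{-b y}) dy − Σ_{j=1}^{Q} τ_j/(1 + a e^{-b y_j}) |. Then ‖ ∫₀^∞ w₊(y/s₊) e^{-y} dy − Σ_{j=1}^{Q} τ_j w₊(y_j/s₊) ‖_M ≤ ‖f‖_{M^{-1}} · sup { g(a, 1/s₊) : a ∈ [λ_min(S,M), λ_max(S,M)] }, where λ_min(S,M) and λ_max(S,M) are the smallest and largest generalized eigenvalues of (S,M), i.e. the infimum and supremum over nonzero x of (xᵀ S x)/(xᵀ M x). -/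
open Matrix MeasureTheory Real Set

/-- The largest generalized eigenvalue of the pair `(S, M)`:
`λ_max(S, M) = sup_{x ≠ 0} (xᵀ S x)/(xᵀ M x)`. -/
noncomputable def lamMaxGen {N : ℕ} (S M : Matrix (Fin N) (Fin N) ℝ) : ℝ :=
  sSup ((fun x : Fin N → ℝ => (x ⬝ᵥ S.mulVec x) / (x ⬝ᵥ M.mulVec x)) '' {x | x ≠ 0})

/-- `w₊(y) = (e^{-y} S + M)⁻¹ f`. -/
noncomputable def wPlus {N : ℕ} (S M : Matrix (Fin N) (Fin N) ℝ) (f : Fin N → ℝ)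
    (y : ℝ) : Fin N → ℝ :=
  (Real.exp (-y) • S + M)⁻¹.mulVec f

/-- Scalar quadrature error `g(a,b)` for the rule `(y_j, τ_j)_{j=1}^Q`:
`g(a,b) = |∫₀^∞ e^{-y}/(1 + a e^{-by}) dy − Σ_j τ_j/(1 + a e^{-b y_j})|`. -/
noncomputable def gQuad (Q : ℕ) (y τ : Fin Q → ℝ) (a b : ℝ) : ℝ :=
  |(∫ t in Set.Ioi (0:ℝ), Real.exp (-t) / (1 + a * Real.exp (-b * t))) -
    ∑ j, τ j / (1 + a * Real.exp (-b * y j))|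

/-! Write `M = BᵀB` and diagonalize the symmetric matrix `B⁻ᵀ S B⁻¹` orthogonally: this gives
`V` with `Vᵀ M V = 1` and `Vᵀ S V = diag d`, hence `(r S + M)⁻¹ = V diag (1 / (1 + r dᵢ)) Vᵀ`.
In these coordinates the quadrature error vector is `V` applied to `(quadErr (dᵢ) (1/s₊) * cᵢ)ᵢ`
with `c = Vᵀ f`, while `‖V v‖_M = |v|` and `‖f‖_{M⁻¹} = |c|`. Each `dᵢ` is the generalized
Rayleigh quotient of `V eᵢ`, so it lies in `[λ_min(S,M), λ_max(S,M)]`. -/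

namespace Matrix

variable {n : Type*} [Fintype n]

theorem dotProduct_mulVec_mulVec_mulVec (V X : Matrix n n ℝ) (v w : n → ℝ) :
    (V *ᵥ v) ⬝ᵥ X *ᵥ (V *ᵥ w) = v ⬝ᵥ (Vᵀ * X * V) *ᵥ w := by
  rw [← mulVec_mulVec, ← mulVec_mulVec, dotProduct_mulVec v Vᵀ, vecMul_transpose]

variable [DecidableEq n]

theorem inv_eq_mul_inv_transpose_mul_mul_mul_transpose {V : Matrix n n ℝ} (hV : IsUnit V.det)
    (X : Matrix n n ℝ) : X⁻¹ = V * (Vᵀ * X * V)⁻¹ * Vᵀ := by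
  have hVt : IsUnit Vᵀ.det := by rwa [det_transpose]
  rw [mul_inv_rev, mul_inv_rev, ← Matrix.mul_assoc, ← Matrix.mul_assoc, mul_nonsing_inv _ hV,
    Matrix.one_mul, Matrix.mul_assoc, nonsing_inv_mul _ hVt, Matrix.mul_one]

theorem exists_transpose_mul_mul_eq_one_and_diagonal {S M : Matrix n n ℝ} (hS : S.IsHermitian)
    (hM : M.PosDef) :
    ∃ (V : Matrix n n ℝ) (d : n → ℝ), Vᵀ * M * V = 1 ∧ Vᵀ * S * V = diagonal d := by
  open scoped MatrixOrder in
  obtain ⟨B, rfl⟩ := CStarAlgebra.nonneg_iff_eq_star_mul_self.mp hM.posSemidef.nonneg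
  have hB : IsUnit B.det := (isUnit_iff_isUnit_det B).mp (isUnit_of_mul_isUnit_right hM.isUnit)
  rw [star_eq_conjTranspose, conjTranspose_eq_transpose_of_trivial] at *
  set A := (B⁻¹)ᵀ * S * B⁻¹
  have hA : A.IsHermitian := by
    simpa [A] using isHermitian_conjTranspose_mul_mul B⁻¹ hS
  set U : Matrix n n ℝ := (hA.eigenvectorUnitary : Matrix n n ℝ)
  have hUU : Uᵀ * U = 1 := by
    have h := Unitary.coe_star_mul_self hA.eigenvectorUnitary
    rwa [star_eq_conjTranspose, conjTranspose_eq_transpose_of_trivial] at h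
  refine ⟨B⁻¹ * U, hA.eigenvalues, ?_, ?_⟩
  · have hBB : B * B⁻¹ = 1 := mul_nonsing_inv _ hB
    calc (B⁻¹ * U)ᵀ * (Bᵀ * B) * (B⁻¹ * U) = Uᵀ * (B * B⁻¹)ᵀ * (B * B⁻¹) * U := by
          simp only [transpose_mul, Matrix.mul_assoc]
      _ = 1 := by rw [hBB, transpose_one, Matrix.mul_one, Matrix.mul_one, hUU]
  · have hdiag := hA.conjStarAlgAut_star_eigenvectorUnitary
    simp only [Unitary.conjStarAlgAut_apply, Unitary.coe_star, RCLike.ofReal_real_eq_id,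
      Function.id_comp, star_eq_conjTranspose, conjTranspose_eq_transpose_of_trivial,
      transpose_transpose] at hdiag
    rw [← hdiag]
    simp only [A, U, transpose_mul, Matrix.mul_assoc]

theorem integral_mulVec {α m : Type*} [Fintype m] [MeasurableSpace α] {μ : Measure α}
    (A : Matrix m n ℝ) {g : α → n → ℝ} (hg : Integrable g μ) :
    ∫ x, A *ᵥ g x ∂μ = A *ᵥ ∫ x, g x ∂μ :=
  (toLin' A).toContinuousLinearMap.integral_comp_comm hg

end Matrix

section SimultaneousDiagonalization

variable {n : Type*} [Fintype n] [DecidableEq n] {S M V : Matrix n n ℝ} {d : n → ℝ}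

theorem inv_smul_add_eq_of_transpose_mul_mul (hV : Vᵀ * M * V = 1)
    (hD : Vᵀ * S * V = diagonal d) {r : ℝ} (hr : ∀ i, 1 + d i * r ≠ 0) :
    (r • S + M)⁻¹ = V * diagonal (fun i => (1 + d i * r)⁻¹) * Vᵀ := by
  have hcongr : Vᵀ * (r • S + M) * V = diagonal (fun i => 1 + d i * r) := by
    rw [Matrix.mul_add, Matrix.add_mul, Matrix.mul_smul, Matrix.smul_mul, hD, hV, add_comm,
      ← diagonal_one, ← diagonal_smul, diagonal_add]
    simp only [Pi.smul_apply, smul_eq_mul, mul_comm r]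
  rw [inv_eq_mul_inv_transpose_mul_mul_mul_transpose (isUnit_det_of_left_inverse hV),
    hcongr, inv_eq_left_inv]
  rw [diagonal_mul_diagonal, ← diagonal_one]
  exact congrArg diagonal (funext fun i => inv_mul_cancel₀ (hr i))

theorem nonneg_of_transpose_mul_mul_eq_diagonal (hS : S.PosSemidef)
    (hD : Vᵀ * S * V = diagonal d) (i : n) : 0 ≤ d i := by
  have h := (hS.conjTranspose_mul_mul_same V).diag_nonneg (i := i)
  simpa [conjTranspose_eq_transpose_of_trivial, hD] using h

end SimultaneousDiagonalization

section GeneralizedRayleighQuotient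

variable {n : Type*} [Fintype n] {S M V : Matrix n n ℝ} {d : n → ℝ}

theorem dotProduct_mulVec_div_dotProduct_mulVec_nonneg (hS : S.PosSemidef) (hM : M.PosSemidef)
    (x : n → ℝ) : 0 ≤ (x ⬝ᵥ S *ᵥ x) / (x ⬝ᵥ M *ᵥ x) := by
  have hSx := hS.dotProduct_mulVec_nonneg x
  have hMx := hM.dotProduct_mulVec_nonneg x
  rw [star_trivial] at hSx hMx
  exact div_nonneg hSx hMx

variable [DecidableEq n]

theorem dotProduct_mulVec_le_sum_mul (hV : Vᵀ * M * V = 1) (hD : Vᵀ * S * V = diagonal d)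
    (hd : ∀ i, 0 ≤ d i) (x : n → ℝ) : x ⬝ᵥ S *ᵥ x ≤ (∑ j, d j) * (x ⬝ᵥ M *ᵥ x) := by
  obtain ⟨z, rfl⟩ : ∃ z, V *ᵥ z = x :=
    ⟨V⁻¹ *ᵥ x, by rw [mulVec_mulVec, mul_nonsing_inv _ (isUnit_det_of_left_inverse hV),
      one_mulVec]⟩
  rw [dotProduct_mulVec_mulVec_mulVec, dotProduct_mulVec_mulVec_mulVec, hD, hV, one_mulVec]
  simp only [dotProduct, mulVec_diagonal, Finset.mul_sum]
  refine Finset.sum_le_sum fun i _ => ?_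
  convert mul_le_mul_of_nonneg_right (Finset.single_le_sum (fun j _ => hd j) (Finset.mem_univ i))
    (mul_self_nonneg (z i)) using 1
  ring

end GeneralizedRayleighQuotient

section GeneralizedEigenvalues

variable {N : ℕ} {S M V : Matrix (Fin N) (Fin N) ℝ} {d : Fin N → ℝ}

theorem lamMinGen_nonneg (hS : S.PosSemidef) (hM : M.PosSemidef) : 0 ≤ lamMinGen S M :=
  Real.sInf_nonneg <| by
    rintro _ ⟨x, -, rfl⟩
    exact dotProduct_mulVec_div_dotProduct_mulVec_nonneg hS hM x

theorem mem_Icc_lamMinGen_lamMaxGen (hS : S.PosSemidef) (hM : M.PosDef)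
    (hV : Vᵀ * M * V = 1) (hD : Vᵀ * S * V = diagonal d) (i : Fin N) :
    d i ∈ Icc (lamMinGen S M) (lamMaxGen S M) := by
  have hd := nonneg_of_transpose_mul_mul_eq_diagonal hS hD
  set R : Set ℝ := (fun x : Fin N → ℝ => (x ⬝ᵥ S *ᵥ x) / (x ⬝ᵥ M *ᵥ x)) '' {x | x ≠ 0}
  have hmem : d i ∈ R := by
    have hMe : (V *ᵥ Pi.single i 1) ⬝ᵥ M *ᵥ (V *ᵥ Pi.single i 1) = 1 := by
      rw [dotProduct_mulVec_mulVec_mulVec, hV]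
      simp
    refine ⟨V *ᵥ Pi.single i 1, fun h0 => ?_, ?_⟩
    · simp [h0] at hMe
    · show _ / _ = _
      rw [hMe, div_one, dotProduct_mulVec_mulVec_mulVec, hD]
      simp
  have hlow : BddBelow R := by
    refine ⟨0, ?_⟩
    rintro _ ⟨x, -, rfl⟩
    exact dotProduct_mulVec_div_dotProduct_mulVec_nonneg hS hM.posSemidef x
  have hup : BddAbove R := by
    refine ⟨∑ j, d j, ?_⟩
    rintro _ ⟨x, hx, rfl⟩
    have hMx := hM.dotProduct_mulVec_pos hx
    rw [star_trivial] at hMx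
    exact (div_le_iff₀ hMx).mpr (dotProduct_mulVec_le_sum_mul hV hD hd x)
  exact ⟨csInf_le hlow hmem, le_csSup hup hmem⟩

end GeneralizedEigenvalues

section WeightedNorms

variable {N : ℕ} {S M V : Matrix (Fin N) (Fin N) ℝ} {d : Fin N → ℝ}

theorem normWeighted_mulVec (hV : Vᵀ * M * V = 1) (v : Fin N → ℝ) :
    normWeighted M (V *ᵥ v) = √(v ⬝ᵥ v) := by
  rw [normWeighted, dotProduct_mulVec_mulVec_mulVec, hV, one_mulVec]

theorem normWeighted_inv (hV : Vᵀ * M * V = 1) (f : Fin N → ℝ) :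
    normWeighted M⁻¹ f = √((Vᵀ *ᵥ f) ⬝ᵥ (Vᵀ *ᵥ f)) := by
  rw [normWeighted, inv_eq_mul_inv_transpose_mul_mul_mul_transpose
    (isUnit_det_of_left_inverse hV), hV, inv_one, Matrix.mul_one, ← mulVec_mulVec,
    dotProduct_mulVec, ← mulVec_transpose]

theorem wPlus_eq (hV : Vᵀ * M * V = 1) (hD : Vᵀ * S * V = diagonal d) (hd : ∀ i, 0 ≤ d i)
    (f : Fin N → ℝ) (s : ℝ) :
    wPlus S M f s = V *ᵥ fun i => (Vᵀ *ᵥ f) i / (1 + d i * exp (-s)) := by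
  have hden : ∀ i, 1 + d i * exp (-s) ≠ 0 := fun i =>
    (add_pos_of_pos_of_nonneg one_pos (mul_nonneg (hd i) (exp_pos _).le)).ne'
  rw [wPlus, inv_smul_add_eq_of_transpose_mul_mul hV hD hden, ← mulVec_mulVec, ← mulVec_mulVec]
  congr 1
  ext i
  rw [mulVec_diagonal, div_eq_inv_mul]

theorem smul_wPlus_div_eq (hV : Vᵀ * M * V = 1) (hD : Vᵀ * S * V = diagonal d)
    (hd : ∀ i, 0 ≤ d i) (f : Fin N → ℝ) (r t sp : ℝ) :
    r • wPlus S M f (t / sp) = V *ᵥ fun i => r / (1 + d i * exp (-(1 / sp) * t)) * (Vᵀ *ᵥ f) i := by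
  rw [wPlus_eq hV hD hd, ← mulVec_smul, show -(t / sp) = -(1 / sp) * t by ring]
  congr 1
  ext i
  simp only [Pi.smul_apply, smul_eq_mul]
  ring

end WeightedNorms

/-- `gQuad Q y τ a b = |quadErr Q y τ a b|` holds by `rfl`. -/
noncomputable def quadErr (Q : ℕ) (y τ : Fin Q → ℝ) (a b : ℝ) : ℝ :=
  (∫ t in Ioi (0:ℝ), exp (-t) / (1 + a * exp (-b * t))) - ∑ j, τ j / (1 + a * exp (-b * y j))

section ScalarQuadrature

theorem integrableOn_exp_neg_Ioi_zero : IntegrableOn (fun t : ℝ => exp (-t)) (Ioi 0) := by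
  simpa using exp_neg_integrableOn_Ioi 0 one_pos

variable {a : ℝ} (b : ℝ)

theorem integrableOn_exp_neg_div_one_add (ha : 0 ≤ a) :
    IntegrableOn (fun t => exp (-t) / (1 + a * exp (-b * t))) (Ioi 0) := by
  refine integrableOn_exp_neg_Ioi_zero.mono' ?_ ?_
  · refine Continuous.aestronglyMeasurable ?_
    exact Continuous.div (by fun_prop) (by fun_prop) fun t => by positivity
  · filter_upwards with t
    rw [norm_div, norm_of_nonneg (exp_pos _).le, norm_of_nonneg (by positivity)]
    exact div_le_self (exp_pos _).le (le_add_of_nonneg_right (by positivity))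

theorem abs_setIntegral_exp_neg_div_one_add_le_one (ha : 0 ≤ a) :
    |∫ t in Ioi (0:ℝ), exp (-t) / (1 + a * exp (-b * t))| ≤ 1 := by
  rw [abs_of_nonneg (setIntegral_nonneg measurableSet_Ioi fun t _ => by positivity)]
  refine (setIntegral_mono_on (integrableOn_exp_neg_div_one_add b ha)
    integrableOn_exp_neg_Ioi_zero measurableSet_Ioi fun t _ => ?_).trans_eq
    integral_exp_neg_Ioi_zero
  exact div_le_self (exp_pos _).le (le_add_of_nonneg_right (by positivity))

theorem gQuad_le {Q : ℕ} (y τ : Fin Q → ℝ) (ha : 0 ≤ a) : gQuad Q y τ a b ≤ 1 + ∑ j, |τ j| := by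
  refine (abs_sub _ _).trans (add_le_add (abs_setIntegral_exp_neg_div_one_add_le_one b ha) ?_)
  refine (Finset.abs_sum_le_sum_abs _ _).trans (Finset.sum_le_sum fun j _ => ?_)
  rw [abs_div, abs_of_pos (by positivity : 0 < 1 + a * exp (-b * y j))]
  exact div_le_self (abs_nonneg _) (le_add_of_nonneg_right (by positivity))

theorem bddAbove_gQuad_image {Q : ℕ} (y τ : Fin Q → ℝ) {s : Set ℝ} (hs : s ⊆ Ici 0) :
    BddAbove ((fun a => gQuad Q y τ a b) '' s) :=
  ⟨1 + ∑ j, |τ j|, by rintro _ ⟨a, ha, rfl⟩; exact gQuad_le b y τ (hs ha)⟩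

end ScalarQuadrature

theorem sqrt_dotProduct_mul_le {n : Type*} [Fintype n] {e c : n → ℝ} {G : ℝ} (hG : 0 ≤ G)
    (he : ∀ i, |e i| ≤ G) : √((e * c) ⬝ᵥ (e * c)) ≤ √(c ⬝ᵥ c) * G := by
  rw [← sqrt_sq hG, ← sqrt_mul' _ (sq_nonneg G), dotProduct, dotProduct, Finset.sum_mul]
  refine sqrt_le_sqrt (Finset.sum_le_sum fun i _ => ?_)
  have hei : e i ^ 2 ≤ G ^ 2 := sq_le_sq' (neg_le_of_abs_le (he i)) (le_of_abs_le (he i))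
  calc (e * c) i * (e * c) i = e i ^ 2 * (c i * c i) := by simp only [Pi.mul_apply]; ring
    _ ≤ G ^ 2 * (c i * c i) := mul_le_mul_of_nonneg_right hei (mul_self_nonneg (c i))
    _ = c i * c i * G ^ 2 := mul_comm _ _

theorem quadrature_error_eq {N : ℕ} {S M V : Matrix (Fin N) (Fin N) ℝ} {d : Fin N → ℝ}
    (hV : Vᵀ * M * V = 1) (hD : Vᵀ * S * V = diagonal d) (hd : ∀ i, 0 ≤ d i)
    (f : Fin N → ℝ) (sp : ℝ) {Q : ℕ} (y τ : Fin Q → ℝ) :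
    (∫ t in Ioi (0:ℝ), exp (-t) • wPlus S M f (t / sp)) - ∑ j, τ j • wPlus S M f (y j / sp) =
      V *ᵥ ((fun i => quadErr Q y τ (d i) (1 / sp)) * (Vᵀ *ᵥ f)) := by
  set c := Vᵀ *ᵥ f
  have hint : ∀ i, IntegrableOn (fun t => exp (-t) / (1 + d i * exp (-(1 / sp) * t)) * c i)
      (Ioi 0) := fun i => (integrableOn_exp_neg_div_one_add _ (hd i)).mul_const _
  simp only [smul_wPlus_div_eq hV hD hd]
  rw [integral_mulVec V (Integrable.of_eval hint), ← mulVec_sum, ← mulVec_sub]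
  congr 1
  ext i
  rw [Pi.sub_apply, eval_integral hint, Finset.sum_apply, integral_mul_const, Pi.mul_apply, quadErr,
    sub_mul, Finset.sum_mul]

theorem quad_error_plus_general {N : ℕ} (S M : Matrix (Fin N) (Fin N) ℝ)
    (hS : S.PosDef) (hM : M.PosDef) (f : Fin N → ℝ)
    (sp : ℝ)
    (Q : ℕ) (y τ : Fin Q → ℝ) :
    normWeighted M
        ((∫ t in Set.Ioi (0:ℝ), Real.exp (-t) • wPlus S M f (t / sp)) -
          ∑ j, τ j • wPlus S M f (y j / sp)) ≤
      normWeighted M⁻¹ f *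
        sSup ((fun a => gQuad Q y τ a (1 / sp)) ''
          Set.Icc (lamMinGen S M) (lamMaxGen S M)) := by
  obtain ⟨V, d, hV, hD⟩ := exists_transpose_mul_mul_eq_one_and_diagonal hS.isHermitian hM
  have hd := nonneg_of_transpose_mul_mul_eq_diagonal hS.posSemidef hD
  have hbdd : BddAbove ((fun a => gQuad Q y τ a (1 / sp)) ''
      Icc (lamMinGen S M) (lamMaxGen S M)) :=
    bddAbove_gQuad_image _ y τ fun a ha =>
      (lamMinGen_nonneg hS.posSemidef hM.posSemidef).trans ha.1
  have hsup_nonneg : 0 ≤ sSup ((fun a => gQuad Q y τ a (1 / sp)) ''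
      Icc (lamMinGen S M) (lamMaxGen S M)) :=
    Real.sSup_nonneg (by rintro _ ⟨a, -, rfl⟩; exact abs_nonneg _)
  rw [quadrature_error_eq hV hD hd, normWeighted_mulVec hV, normWeighted_inv hV]
  exact sqrt_dotProduct_mul_le hsup_nonneg fun i =>
    le_csSup hbdd ⟨d i, mem_Icc_lamMinGen_lamMaxGen hS.posSemidef hM hV hD i, rfl⟩

/-- The '+' half of Proposition 4.1: the vector-valued quadrature error for `w₊` is
controlled by the scalar quadrature error function `g` over the spectral interval
`I₊ = [λ_min(S,M), λ_max(S,M)]`. -/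
theorem quad_error_plus {N : ℕ} (S M : Matrix (Fin N) (Fin N) ℝ)
    (hS : S.PosDef) (hM : M.PosDef) (f : Fin N → ℝ)
    (sp : ℝ) (hsp : sp ∈ Set.Ioo (0:ℝ) 1)
    (Q : ℕ) (y τ : Fin Q → ℝ) (hy : ∀ j, 0 ≤ y j) (hτ : ∀ j, 0 ≤ τ j) :
    normWeighted M
        ((∫ t in Set.Ioi (0:ℝ), Real.exp (-t) • wPlus S M f (t / sp)) -
          ∑ j, τ j • wPlus S M f (y j / sp)) ≤
      normWeighted M⁻¹ f *
        sSup ((fun a => gQuad Q y τ a (1 / sp)) ''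
          Set.Icc (lamMinGen S M) (lamMaxGen S M)) :=
  quad_error_plus_general S M hS hM f sp Q y τ
end
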